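/- Over a field of characteristic 2, there exists a 4-dimensional solvable Lie algebra L with basis x₁,x₂,x₃,x₄ and products [x₄,x₂]=x₁, [x₃,x₁]=x₁, [x₃,x₂]=x₂ (all other basis brackets zero) whose nilradical is span{x₁,x₂,x₄}, and a derivation D of L with D(x₁)=x₂, D(x₂)=0, D(x₃)=0, D(x₄)=x₃; in particular D does not preserve the nilradical, so N(L) is not a characteristic ideal. -/

import Mathlib

/-!
The algebra is `Kx₃ ⋉ span{x₁, x₂, x₄}`: the ideal `N = span{x₁, x₂, x₄}` is a Heisenberg algebra
(its only bracket is `[x₄, x₂] = x₁`), while `ad x₃` acts on `x₁` with eigenvalue `1`. Hence every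
element with a nonzero `x₃`-coordinate has `x₁` as an eigenvector of nonzero eigenvalue, so it lies in
no nilpotent ideal, and `N` is the nilradical. The map `D` with `x₁ ↦ x₂, x₄ ↦ x₃` satisfies the Leibniz
rule up to the defect `2 (a₄ b₁ - a₁ b₄) x₁` on `(a, b)`, which vanishes in characteristic `2`; and
`D x₄ = x₃ ∉ N`.
-/

/-- The canonical quotient map `L → L ⧸ I` as a morphism of Lie algebras. -/
def lieQuotMk {F L : Type*} [Field F] [LieRing L] [LieAlgebra F L] (I : LieIdeal F L) :
    L →ₗ⁅F⁆ L ⧸ I where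
  toLinearMap := (LieSubmodule.Quotient.mk' I).toLinearMap
  map_lie' := rfl

variable (F : Type*) [Field F]

/-- The nilradical: the largest nilpotent ideal of a (finite-dimensional) Lie algebra. -/
noncomputable def nilrad (L : Type*) [LieRing L] [LieAlgebra F L] : LieIdeal F L :=
  sSup {I : LieIdeal F L | LieRing.IsNilpotent I}

/-- The upper nilpotent series: `N 0 = 0`, `N (i+1) / N i = nilradical of L ⧸ N i`. -/
noncomputable def upperNil (L : Type*) [LieRing L] [LieAlgebra F L] : ℕ → LieIdeal F L
  | 0 => ⊥
  | n + 1 => LieIdeal.comap (lieQuotMk (upperNil L n)) (nilrad F (L ⧸ upperNil L n))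

/-- The nilpotent length: the least `n` with `N n = L`. -/
noncomputable def nilLen (L : Type*) [LieRing L] [LieAlgebra F L] : ℕ :=
  sInf {n : ℕ | upperNil F L n = ⊤}

/-- The nilpotent residual `γ∞(L)`: the smallest ideal with nilpotent quotient. -/
noncomputable def nilResidual (L : Type*) [LieRing L] [LieAlgebra F L] : LieIdeal F L :=
  sInf {I : LieIdeal F L | LieRing.IsNilpotent (L ⧸ I)}

/-- The lower nilpotent series: `Γ 0 = L`, `Γ (i+1) = γ∞(Γ i)`, viewed as subalgebras of `L`. -/
noncomputable def lowerNil (L : Type*) [LieRing L] [LieAlgebra F L] : ℕ → LieSubalgebra F L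
  | 0 => ⊤
  | n + 1 =>
      LieSubalgebra.map (lowerNil L n).incl
        ((nilResidual F (lowerNil L n)).toLieSubalgebra)

/-- `M` is a maximal (proper) subalgebra of `L`. -/
def IsMaxSub {L : Type*} [LieRing L] [LieAlgebra F L] (M : LieSubalgebra F L) : Prop :=
  M ≠ ⊤ ∧ ∀ K : LieSubalgebra F L, M < K → K = ⊤

/-- The Frattini subalgebra: the intersection of all maximal subalgebras. -/
noncomputable def lieFrattini (L : Type*) [LieRing L] [LieAlgebra F L] : LieSubalgebra F L :=
  sInf {M : LieSubalgebra F L | IsMaxSub F M}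

/-- The core of a subalgebra `U`: the largest ideal of `L` contained in `U`. -/
noncomputable def lieCore {L : Type*} [LieRing L] [LieAlgebra F L] (U : LieSubalgebra F L) :
    LieIdeal F L :=
  sSup {I : LieIdeal F L | (I : Set L) ⊆ (U : Set L)}

/-- `A` is a minimal ideal of `L`. -/
def IsMinIdeal {L : Type*} [LieRing L] [LieAlgebra F L] (A : LieIdeal F L) : Prop :=
  A ≠ ⊥ ∧ ∀ B : LieIdeal F L, B < A → B = ⊥

/-- The Frattini series: `φ i (L) / N (i-1) (L) = φ(L ⧸ N (i-1) (L))` for `i ≥ 1`. -/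
noncomputable def fratSeries (L : Type*) [LieRing L] [LieAlgebra F L] (i : ℕ) :
    LieSubalgebra F L :=
  LieSubalgebra.comap (lieQuotMk (upperNil F L (i - 1)))
    (lieFrattini F (L ⧸ upperNil F L (i - 1)))

/-- `L` is extreme: `N i (L) / φ i (L)` is a chief factor of `L` for each `1 ≤ i ≤ n(L)`. -/
def IsExtremeLie (L : Type*) [LieRing L] [LieAlgebra F L] : Prop :=
  ∀ i, 1 ≤ i → i ≤ nilLen F L →
    (fratSeries F L i : Set L) ⊆ (upperNil F L i : Set L) ∧
    (fratSeries F L i : Set L) ≠ (upperNil F L i : Set L) ∧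
    ∀ C : LieIdeal F L, (fratSeries F L i : Set L) ⊆ (C : Set L) → C ≤ upperNil F L i →
      (C : Set L) = (fratSeries F L i : Set L) ∨ C = upperNil F L i

/-- `L` is supersolvable: it has a chain of ideals with one-dimensional quotients. -/
def IsSupersolvable (L : Type*) [LieRing L] [LieAlgebra F L] : Prop :=
  ∃ (n : ℕ) (C : ℕ → LieIdeal F L), C 0 = ⊥ ∧ C n = ⊤ ∧
    ∀ i < n, C i ≤ C (i + 1) ∧
      Module.finrank F (C (i + 1)) = Module.finrank F (C i) + 1

/-- A minimal ideal `A` is complemented if some maximal subalgebra `M` satisfies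
`L = A + M` and `A ∩ M = 0`. -/
def IsComplementedIdeal {L : Type*} [LieRing L] [LieAlgebra F L] (A : LieIdeal F L) : Prop :=
  ∃ M : LieSubalgebra F L, IsMaxSub F M ∧
    A.toSubmodule ⊔ M.toSubmodule = ⊤ ∧ A.toSubmodule ⊓ M.toSubmodule = ⊥

theorem LieAlgebra.isSolvable_of_lie_lie_lie_eq_zero {L : Type*} [LieRing L]
    (h : ∀ a b c d : L, ⁅⁅a, b⁆, ⁅c, d⁆⁆ = 0) : LieAlgebra.IsSolvable L := by
  have lie_eq_zero_of_mem {u : L} (hu : u ∈ LieAlgebra.derivedSeries ℤ L 1) {v : L}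
      (hv : ∀ a b : L, ⁅⁅a, b⁆, v⁆ = 0) : ⁅u, v⁆ = 0 := by
    replace hu : u ∈ Submodule.span ℤ {⁅x, y⁆ | (x : L) (y : L)} := by
      rwa [← LieAlgebra.coe_derivedSeries_one_eq]
    induction hu using Submodule.span_induction with
    | mem u hu => obtain ⟨a, b, rfl⟩ := hu; exact hv a b
    | zero => exact zero_lie v
    | add u w _ _ hu hw => rw [add_lie, hu, hw, add_zero]
    | smul c u _ hu => rw [smul_lie, hu, smul_zero]
  refine LieAlgebra.IsSolvable.mk (R := ℤ) (k := 2) ?_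
  rw [LieAlgebra.derivedSeries_def, LieAlgebra.derivedSeriesOfIdeal_succ,
    LieSubmodule.lie_eq_bot_iff]
  intro u hu v hv
  refine lie_eq_zero_of_mem hu fun a b => ?_
  rw [← lie_skew, lie_eq_zero_of_mem hv fun c d => h c d a b, neg_zero]

theorem LieRing.isNilpotent_of_lie_lie_eq_zero {R L : Type*} [CommRing R] [LieRing L]
    [LieAlgebra R L] [IsNoetherian R L] (h : ∀ a b c : L, ⁅a, ⁅b, c⁆⁆ = 0) :
    LieRing.IsNilpotent L := by
  rw [LieAlgebra.isNilpotent_iff_forall (R := R)]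
  exact fun a => ⟨2, LinearMap.ext fun c => by simp [sq, h]⟩

theorem LieAlgebra.eq_zero_of_lie_eq_smul {R L : Type*} [CommRing R] [IsDomain R] [LieRing L]
    [LieAlgebra R L] [Module.IsTorsionFree R L] [LieRing.IsNilpotent L] {x y : L} {c : R}
    (hc : c ≠ 0) (h : ⁅x, y⁆ = c • y) : y = 0 := by
  by_contra hy
  have hc' : Module.End.HasEigenvalue (LieAlgebra.ad R L x) c :=
    Module.End.hasEigenvalue_of_hasEigenvector ⟨Module.End.mem_eigenspace_iff.mpr h, hy⟩
  obtain ⟨k, hk⟩ := LieAlgebra.nilpotent_ad_of_nilpotent_algebra R L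
  exact hc (hc'.isNilpotent_of_isNilpotent ⟨k, hk x⟩).eq_zero

theorem LieIdeal.eq_zero_of_lie_eq_smul {K L : Type*} [Field K] [LieRing L] [LieAlgebra K L]
    {I : LieIdeal K L} [LieRing.IsNilpotent I] {x y : L} (hx : x ∈ I) {c : K} (hc : c ≠ 0)
    (h : ⁅x, y⁆ = c • y) : y = 0 := by
  have hy : y ∈ I := by
    simpa [h, hc] using I.smul_mem c⁻¹ (lie_mem_left K L I x y hx)
  simpa using LieAlgebra.eq_zero_of_lie_eq_smul (x := (⟨x, hx⟩ : I)) (y := ⟨y, hy⟩) hc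
    (Subtype.ext h)

def Solv4 (R : Type*) : Type _ := Fin 4 → R

namespace Solv4

section CommRing

variable {R : Type*} [CommRing R]

instance : AddCommGroup (Solv4 R) := Pi.addCommGroup

instance : Module R (Solv4 R) := Pi.module _ _ _

/-- Indices are shifted by one: `coord x i` is the coefficient of `x_{i+1}`. -/
def coord : Solv4 R ≃ₗ[R] (Fin 4 → R) := LinearEquiv.refl R _

@[ext] theorem ext {x y : Solv4 R} (h : ∀ i, coord x i = coord y i) : x = y := funext h

/-- The bilinear extension of `[x₄, x₂] = x₁`, `[x₃, x₁] = x₁`, `[x₃, x₂] = x₂`. -/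
instance : Bracket (Solv4 R) (Solv4 R) where
  bracket x y := coord.symm
    ![coord x 3 * coord y 1 - coord x 1 * coord y 3 + coord x 2 * coord y 0 - coord x 0 * coord y 2,
      coord x 2 * coord y 1 - coord x 1 * coord y 2, 0, 0]

@[simp] theorem coord_lie (x y : Solv4 R) : coord ⁅x, y⁆ =
    ![coord x 3 * coord y 1 - coord x 1 * coord y 3 + coord x 2 * coord y 0 - coord x 0 * coord y 2,
      coord x 2 * coord y 1 - coord x 1 * coord y 2, 0, 0] :=
  coord.apply_symm_apply _

instance : LieRing (Solv4 R) where
  add_lie x y z := by ext i; fin_cases i <;> simp <;> ring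
  lie_add x y z := by ext i; fin_cases i <;> simp <;> ring
  lie_self x := by ext i; fin_cases i <;> simp <;> ring
  leibniz_lie x y z := by ext i; fin_cases i <;> simp <;> ring

instance : LieAlgebra R (Solv4 R) where
  lie_smul c x y := by ext i; fin_cases i <;> simp <;> ring

noncomputable def basis : Module.Basis (Fin 4) R (Solv4 R) :=
  (Pi.basisFun R (Fin 4)).map coord.symm

@[simp] theorem coord_basis (i : Fin 4) : coord (basis i : Solv4 R) = Pi.single i 1 := by
  simp [basis]

instance : Module.Finite R (Solv4 R) := Module.Finite.equiv coord.symm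

theorem finrank_eq [StrongRankCondition R] : Module.finrank R (Solv4 R) = 4 := by
  simp [coord.finrank_eq]

instance : LieAlgebra.IsSolvable (Solv4 R) :=
  LieAlgebra.isSolvable_of_lie_lie_lie_eq_zero fun a b c d => by
    ext i; fin_cases i <;> simp <;> ring

def kerX3 : LieIdeal R (Solv4 R) where
  __ := LinearMap.ker ((LinearMap.proj 2).comp coord.toLinearMap)
  lie_mem {x y} _ := by simp

theorem mem_kerX3 {x : Solv4 R} : x ∈ kerX3 ↔ coord x 2 = 0 := Iff.rfl

theorem kerX3_eq_span :
    ((kerX3 : LieIdeal R (Solv4 R)) : Submodule R (Solv4 R)) =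
      Submodule.span R {basis 0, basis 1, basis 3} := by
  ext x
  have image_basis : ({basis 0, basis 1, basis 3} : Set (Solv4 R)) = basis '' {0, 1, 3} := by
    simp [Set.image_insert_eq]
  rw [LieIdeal.toLieSubalgebra_toSubmodule, LieSubmodule.mem_toSubmodule, mem_kerX3, image_basis,
    basis.mem_span_image, Finsupp.support_subset_iff]
  simp only [basis, Module.Basis.map_repr, LinearEquiv.trans_apply, LinearEquiv.symm_symm,
    Pi.basisFun_repr, Set.mem_insert_iff, Set.mem_singleton_iff, not_or, and_imp]
  refine ⟨fun h i => ?_, fun h => h 2 (by decide) (by decide) (by decide)⟩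
  fin_cases i <;> simp [h]

theorem lie_lie_eq_zero_of_mem_kerX3 {x y z : Solv4 R} (hx : x ∈ kerX3) (hy : y ∈ kerX3)
    (hz : z ∈ kerX3) : ⁅x, ⁅y, z⁆⁆ = 0 := by
  rw [mem_kerX3] at hx hy hz
  ext i; fin_cases i <;> simp [hx, hy, hz]

def derivation [CharP R 2] : LieDerivation R (Solv4 R) (Solv4 R) where
  toFun x := coord.symm ![0, coord x 0, coord x 3, 0]
  map_add' x y := by ext i; fin_cases i <;> simp
  map_smul' c x := by ext i; fin_cases i <;> simp
  leibniz' x y := by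
    ext i
    fin_cases i <;>
      simp only [LinearMap.coe_mk, AddHom.coe_mk, coord_lie, LinearEquiv.apply_symm_apply, map_sub,
        Pi.sub_apply, Fin.zero_eta, Fin.mk_one, Fin.reduceFinMk, Matrix.cons_val, mul_zero, sub_zero,
        add_zero, sub_self]
    · linear_combination
        (coord x 0 * coord y 3 - coord x 3 * coord y 0) * CharTwo.two_eq_zero (R := R)
    · ring

@[simp] theorem coord_derivation [CharP R 2] (x : Solv4 R) :
    coord (derivation x) = ![0, coord x 0, coord x 3, 0] :=
  coord.apply_symm_apply _

end CommRing

section Field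

variable {K : Type*} [Field K]

instance : LieRing.IsNilpotent (kerX3 : LieIdeal K (Solv4 K)) :=
  LieRing.isNilpotent_of_lie_lie_eq_zero (R := K) fun x y z =>
    Subtype.ext (lie_lie_eq_zero_of_mem_kerX3 x.2 y.2 z.2)

theorem le_kerX3_of_isNilpotent (I : LieIdeal K (Solv4 K)) [LieRing.IsNilpotent I] :
    I ≤ kerX3 := by
  intro x hx
  by_contra hx3
  rw [mem_kerX3] at hx3
  have eigen : ⁅x, basis 0⁆ = coord x 2 • (basis 0 : Solv4 K) := by ext i; fin_cases i <;> simp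
  exact basis.ne_zero 0 (LieIdeal.eq_zero_of_lie_eq_smul hx hx3 eigen)

theorem nilrad_eq_kerX3 : nilrad K (Solv4 K) = kerX3 :=
  IsGreatest.csSup_eq ⟨inferInstanceAs (LieRing.IsNilpotent kerX3),
    fun I (_ : LieRing.IsNilpotent I) => le_kerX3_of_isNilpotent I⟩

end Field

end Solv4

/-- Over a field of characteristic `2` there is a `4`-dimensional solvable Lie algebra
whose nilradical is not preserved by some derivation. -/
theorem stmt10 (F : Type) [Field F] [CharP F 2] :
    ∃ (L : Type) (_ : LieRing L) (_ : LieAlgebra F L) (b : Module.Basis (Fin 4) F L),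
      FiniteDimensional F L ∧ Module.finrank F L = 4 ∧ LieAlgebra.IsSolvable L ∧
      ⁅b 3, b 1⁆ = b 0 ∧ ⁅b 2, b 0⁆ = b 0 ∧ ⁅b 2, b 1⁆ = b 1 ∧
      ⁅b 0, b 1⁆ = 0 ∧ ⁅b 0, b 3⁆ = 0 ∧ ⁅b 2, b 3⁆ = 0 ∧
      ((nilrad F L : Submodule F L) = Submodule.span F {b 0, b 1, b 3}) ∧
      ∃ D : LieDerivation F L L,
        D (b 0) = b 1 ∧ D (b 1) = 0 ∧ D (b 2) = 0 ∧ D (b 3) = b 2 ∧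
        ¬ (∀ x ∈ nilrad F L, D x ∈ nilrad F L) := by
  refine ⟨Solv4 F, inferInstance, inferInstance, Solv4.basis, inferInstance, Solv4.finrank_eq,
    inferInstance, ?_, ?_, ?_, ?_, ?_, ?_, Solv4.nilrad_eq_kerX3 (K := F) ▸ Solv4.kerX3_eq_span,
    Solv4.derivation, ?_, ?_, ?_, ?_, ?_⟩
  rotate_right
  · rw [Solv4.nilrad_eq_kerX3]
    intro h
    have x₄_mem : Solv4.basis 3 ∈ (Solv4.kerX3 : LieIdeal F (Solv4 F)) := by
      simp [Solv4.mem_kerX3]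
    simpa [Solv4.mem_kerX3] using h _ x₄_mem
  all_goals ext i; fin_cases i <;> simp
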